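/- arXiv:1901.03240 — 2 statements merged into one kernel-verified Lean document; each statement's English description precedes it below -/
import Mathlib

section
/- Let x ∈ [0,1]^d and suppose for some odd-sized set V ⊆ {1,…,d} the forbidden-set inequality Σ_{i∈V} xᵢ - Σ_{i∉V} xᵢ ≤ |V| - 1 is violated. Then for every other odd-sized set W ≠ V, the forbidden-set inequality Σ_{i∈W} xᵢ - Σ_{i∉W} xᵢ < |W| - 1 holds strictly. -/
open Finset

/-- Squared Euclidean distance on `Fin d → ℝ`. -/
noncomputable def sqdist {d : ℕ} (x y : Fin d → ℝ) : ℝ := ∑ i, (x i - y i) ^ 2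

/-- `z` is the Euclidean (nearest-point) projection of `x` onto `S`. -/
def IsProj {d : ℕ} (S : Set (Fin d → ℝ)) (x z : Fin d → ℝ) : Prop :=
  z ∈ S ∧ ∀ y ∈ S, sqdist x z ≤ sqdist x y

/-- The even parity polytope: convex hull of 0/1 vectors with an even number of ones. -/
noncomputable def PEven (d : ℕ) : Set (Fin d → ℝ) :=
  convexHull ℝ {x | ∃ S : Finset (Fin d), Even S.card ∧ ∀ i, x i = if i ∈ S then 1 else 0}

/-- The odd parity polytope: convex hull of 0/1 vectors with an odd number of ones. -/
noncomputable def POdd (d : ℕ) : Set (Fin d → ℝ) :=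
  convexHull ℝ {x | ∃ S : Finset (Fin d), Odd S.card ∧ ∀ i, x i = if i ∈ S then 1 else 0}

/-! For `x` in the unit cube, `∑_{i ∈ S} xᵢ - ∑_{i ∉ S} xᵢ = |S| - ‖x - 1_S‖₁`, so violating the
inequality for `V` means `‖x - 1_V‖₁ < 1`. Two distinct odd sets differ in at least two
coordinates, so `‖1_V - 1_W‖₁ ≥ 2`, and the triangle inequality gives `‖x - 1_W‖₁ > 1`. -/

lemma card_symmDiff_add_two_mul_card_inter {α : Type*} [DecidableEq α] (s t : Finset α) :
    #(symmDiff s t) + 2 * #(s ∩ t) = #s + #t := by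
  rw [symmDiff_def, sup_eq_union, card_union_of_disjoint disjoint_sdiff_sdiff]
  have hs := card_sdiff_add_card_inter s t
  have ht := card_sdiff_add_card_inter t s
  rw [inter_comm t s] at ht
  omega

lemma two_le_card_symmDiff_of_odd {α : Type*} [DecidableEq α] {s t : Finset α}
    (hs : Odd #s) (ht : Odd #t) (hst : s ≠ t) : 2 ≤ #(symmDiff s t) := by
  have hpos : 0 < #(symmDiff s t) :=
    card_pos.mpr (nonempty_iff_ne_empty.mpr fun h => hst (symmDiff_eq_bot.mp h))
  have := card_symmDiff_add_two_mul_card_inter s t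
  obtain ⟨a, ha⟩ := hs
  obtain ⟨b, hb⟩ := ht
  omega

variable {ι : Type*} [Fintype ι]

noncomputable def l1dist (x y : ι → ℝ) : ℝ := ∑ i, |x i - y i|

lemma l1dist_le_add (x y z : ι → ℝ) : l1dist y z ≤ l1dist x y + l1dist x z := by
  rw [l1dist, l1dist, l1dist, ← sum_add_distrib]
  refine sum_le_sum fun i _ => ?_
  calc |y i - z i| ≤ |y i - x i| + |x i - z i| := abs_sub_le _ _ _
    _ = |x i - y i| + |x i - z i| := by rw [abs_sub_comm]

variable [DecidableEq ι]

def vertex (S : Finset ι) : ι → ℝ := fun i => if i ∈ S then 1 else 0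

lemma l1dist_vertex_vertex (s t : Finset ι) : l1dist (vertex s) (vertex t) = #(symmDiff s t) := by
  have hterm : ∀ i, |vertex s i - vertex t i| = if i ∈ symmDiff s t then 1 else 0 := by
    intro i
    by_cases hs : i ∈ s <;> by_cases ht : i ∈ t <;> simp [vertex, mem_symmDiff, hs, ht]
  simp only [l1dist, hterm, sum_boole, filter_mem_eq_inter, univ_inter]

lemma sum_sub_sum_compl_eq_card_sub_l1dist {x : ι → ℝ} (hx : ∀ i, 0 ≤ x i ∧ x i ≤ 1)
    (S : Finset ι) : ∑ i ∈ S, x i - ∑ i ∈ Sᶜ, x i = #S - l1dist x (vertex S) := by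
  have hterm : ∀ i, |x i - vertex S i| = if i ∈ S then 1 - x i else x i := by
    intro i
    by_cases hi : i ∈ S
    · simp only [vertex, hi, if_true]; rw [abs_of_nonpos (by linarith [hx i])]; ring
    · simp only [vertex, hi, if_false, sub_zero]; exact abs_of_nonneg (hx i).1
  rw [l1dist, ← sum_add_sum_compl S]
  simp only [hterm]
  rw [sum_ite_of_true (fun i hi => hi), sum_ite_of_false (fun i hi => mem_compl.mp hi),
    sum_sub_distrib, sum_const, nsmul_one]
  ring

theorem at_most_one_odd_cut (d : ℕ) (x : Fin d → ℝ)
    (hx : ∀ i, 0 ≤ x i ∧ x i ≤ 1)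
    (V : Finset (Fin d)) (hV : Odd V.card)
    (hcut : (V.card : ℝ) - 1 < ∑ i ∈ V, x i - ∑ i ∈ Vᶜ, x i) :
    ∀ W : Finset (Fin d), Odd W.card → W ≠ V →
      ∑ i ∈ W, x i - ∑ i ∈ Wᶜ, x i < (W.card : ℝ) - 1 := by
  intro W hW hWV
  rw [sum_sub_sum_compl_eq_card_sub_l1dist hx] at hcut ⊢
  have hsep : (2 : ℝ) ≤ l1dist (vertex V) (vertex W) := by
    rw [l1dist_vertex_vertex]
    exact_mod_cast two_le_card_symmDiff_of_odd hV hW hWV.symm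
  linarith [l1dist_le_add x (vertex V) (vertex W)]
end

section
/- Let z = Π_{P_{d,even}}(x) with zᵢ = 0 for some index i. Then (z₁,…,z_{i-1},z_{i+1},…,z_d) = Π_{P_{d-1,even}}((x₁,…,x_{i-1},x_{i+1},…,x_d)). -/
open Finset

/-- Face lemma: if all points of `V` have nonnegative `i`-th coordinate and a point of the
convex hull has `i`-th coordinate zero, it lies in the hull of the vertices with zero there. -/
lemma mem_convexHull_face {d : ℕ} (V : Set (Fin d → ℝ)) (i : Fin d)
    (hV : ∀ v ∈ V, 0 ≤ v i) {z : Fin d → ℝ} (hz : z ∈ convexHull ℝ V)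
    (hzi : z i = 0) : z ∈ convexHull ℝ {v ∈ V | v i = 0} := by
  rw [_root_.convexHull_eq] at hz
  obtain ⟨ι, t, w, f, hw0, hw1, hfs, hcm⟩ := hz
  have hzsum : z = ∑ k ∈ t, w k • f k := by
    rw [← hcm, Finset.centerMass_eq_of_sum_1 _ _ hw1]
  have hterms : ∀ k ∈ t, w k * f k i = 0 := by
    have hsum0 : ∑ k ∈ t, w k * f k i = 0 := by
      have : z i = ∑ k ∈ t, w k * f k i := by
        rw [hzsum]; simp [Finset.sum_apply]
      rw [← this, hzi]
    exact (Finset.sum_eq_zero_iff_of_nonneg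
      (fun k hk => mul_nonneg (hw0 k hk) (hV _ (hfs k hk)))).1 hsum0
  have hcm' : ({k ∈ t | w k ≠ 0} : Finset ι).centerMass w f = z := by
    rw [Finset.centerMass_filter_ne_zero, hcm]
  rw [← hcm']
  refine Finset.centerMass_mem_convexHull _ (fun k hk => hw0 k (Finset.mem_filter.1 hk).1) ?_ ?_
  · rw [Finset.sum_filter_ne_zero, hw1]; exact one_pos
  · intro k hk
    obtain ⟨hkt, hkw⟩ := Finset.mem_filter.1 hk
    refine ⟨hfs k hkt, ?_⟩
    have := hterms k hkt
    rcases mul_eq_zero.1 this with h | h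
    · exact absurd h hkw
    · exact h

lemma restrict_mem_PEven {n : ℕ} (i : Fin (n + 1)) {z : Fin (n + 1) → ℝ}
    (hz : z ∈ PEven (n + 1)) (hzi : z i = 0) :
    (fun j => z (i.succAbove j)) ∈ PEven n := by
  set V : Set (Fin (n + 1) → ℝ) :=
    {x | ∃ S : Finset (Fin (n + 1)), Even S.card ∧ ∀ i, x i = if i ∈ S then 1 else 0}
  have hface : z ∈ convexHull ℝ {v ∈ V | v i = 0} :=
    mem_convexHull_face V i
      (by rintro v ⟨S, _, hS⟩; rw [hS i]; split <;> norm_num) hz hzi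
  set R : (Fin (n + 1) → ℝ) →ₗ[ℝ] (Fin n → ℝ) := LinearMap.funLeft ℝ ℝ i.succAbove
  have hRz : (fun j => z (i.succAbove j)) = R z := rfl
  rw [hRz]
  have himg : R '' {v ∈ V | v i = 0} ⊆
      {x | ∃ S : Finset (Fin n), Even S.card ∧ ∀ i, x i = if i ∈ S then 1 else 0} := by
    rintro _ ⟨v, ⟨⟨S, hSeven, hSv⟩, hvi⟩, rfl⟩
    have hiS : i ∉ S := by
      intro h; rw [hSv i, if_pos h] at hvi; norm_num at hvi
    refine ⟨Finset.univ.filter (fun j => i.succAbove j ∈ S), ?_, ?_⟩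
    · have : S = (Finset.univ.filter (fun j => i.succAbove j ∈ S)).image i.succAbove := by
        ext k
        simp only [Finset.mem_image, Finset.mem_filter, Finset.mem_univ, true_and]
        constructor
        · intro hk
          obtain ⟨j, hj⟩ := Fin.exists_succAbove_eq (fun h : k = i => hiS (h ▸ hk))
          exact ⟨j, hj.symm ▸ hk, hj⟩
        · rintro ⟨j, hj, rfl⟩; exact hj
      have hcard : (Finset.univ.filter (fun j => i.succAbove j ∈ S)).card = S.card := by
        conv_rhs => rw [this]
        exact (Finset.card_image_of_injective _ (Fin.succAbove_right_injective)).symm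
      rw [hcard]; exact hSeven
    · intro j
      simp only [R, LinearMap.funLeft_apply, Function.comp]
      rw [hSv (i.succAbove j)]
      simp
  have h1 : R z ∈ R '' convexHull ℝ {v ∈ V | v i = 0} := Set.mem_image_of_mem R hface
  rw [R.image_convexHull] at h1
  exact convexHull_mono himg h1

/-- Insert a zero at position `i`. -/
def insVec {n : ℕ} (i : Fin (n + 1)) (y : Fin n → ℝ) : Fin (n + 1) → ℝ := i.insertNth 0 y

lemma insVec_same {n : ℕ} (i : Fin (n + 1)) (y : Fin n → ℝ) : insVec i y i = 0 := by
  simp [insVec]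

lemma insVec_succAbove {n : ℕ} (i : Fin (n + 1)) (y : Fin n → ℝ) (j : Fin n) :
    insVec i y (i.succAbove j) = y j := by
  simp [insVec]

lemma insert_mem_PEven {n : ℕ} (i : Fin (n + 1)) {y : Fin n → ℝ}
    (hy : y ∈ PEven n) : insVec i y ∈ PEven (n + 1) := by
  have hlin : IsLinearMap ℝ (insVec i) := by
    constructor
    · intro a b
      ext k
      rcases eq_or_ne k i with rfl | hk
      · simp [insVec_same]
      · obtain ⟨j, rfl⟩ := Fin.exists_succAbove_eq hk
        simp [insVec_succAbove]
    · intro c a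
      ext k
      rcases eq_or_ne k i with rfl | hk
      · simp [insVec_same]
      · obtain ⟨j, rfl⟩ := Fin.exists_succAbove_eq hk
        simp [insVec_succAbove]
  have := hlin.image_convexHull
    {x | ∃ S : Finset (Fin n), Even S.card ∧ ∀ i, x i = if i ∈ S then 1 else 0}
  have hmem : insVec i y ∈ insVec i '' PEven n :=
    Set.mem_image_of_mem _ hy
  rw [PEven] at hmem
  rw [this] at hmem
  refine convexHull_mono ?_ hmem
  rintro _ ⟨v, ⟨S, hSeven, hSv⟩, rfl⟩
  refine ⟨S.map (i.succAboveEmb), by simpa using hSeven, ?_⟩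
  intro k
  rcases eq_or_ne k i with rfl | hk
  · rw [insVec_same, if_neg]
    simp only [Finset.mem_map]
    rintro ⟨j, _, hj⟩
    exact Fin.succAbove_ne _ j hj
  · obtain ⟨j, rfl⟩ := Fin.exists_succAbove_eq hk
    rw [insVec_succAbove, hSv j]
    congr 1
    simp only [Finset.mem_map, Fin.succAboveEmb_apply, eq_iff_iff]
    constructor
    · intro hj; exact ⟨j, hj, rfl⟩
    · rintro ⟨j', hj', hjj⟩
      rwa [← Fin.succAbove_right_injective hjj]

theorem projection_recursion_even_zero (n : ℕ) (x z : Fin (n + 1) → ℝ)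
    (hz : IsProj (PEven (n + 1)) x z) (i : Fin (n + 1)) (hzi : z i = 0) :
    IsProj (PEven n) (fun j => x (i.succAbove j)) (fun j => z (i.succAbove j)) := by
  obtain ⟨hzmem, hzopt⟩ := hz
  refine ⟨restrict_mem_PEven i hzmem hzi, ?_⟩
  intro y hy
  have hy' : insVec i y ∈ PEven (n + 1) := insert_mem_PEven i hy
  have h := hzopt _ hy'
  have hsplit1 : sqdist x z = (x i - z i) ^ 2 +
      sqdist (fun j => x (i.succAbove j)) (fun j => z (i.succAbove j)) := by
    simp only [sqdist]
    exact Fin.sum_univ_succAbove (fun k => (x k - z k) ^ 2) i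
  have hsplit2 : sqdist x (insVec i y) = (x i - 0) ^ 2 +
      sqdist (fun j => x (i.succAbove j)) y := by
    simp only [sqdist]
    rw [Fin.sum_univ_succAbove (fun k => (x k - insVec i y k) ^ 2) i]
    simp [insVec_same, insVec_succAbove]
  rw [hsplit1, hsplit2, hzi] at h
  linarith
end
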